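/- The conservation law for exchange interactions is independent of the virtual braid exchanged and of the chosen reducible segment: if the crossing sequence of the left braid B_1 admits two decompositions X_{1A}++X_{1B} = X̃_{1A}++X̃_{1B} and two exchanged twist triples T, T̃ ∈ ℤ³ are used, then the two right exchange interactions of B_1 = (S_{1l}, T_1, X_{1A}++X_{1B}, S) with B_2 = (S, T_2, X_2, S_{2r}) yield output pairs (B'_1, B'_2) and (B̃'_1, B̃'_2) with equal total effective twist, Θ(B'_1) + Θ(B'_2) = Θ(B̃'_1) + Θ(B̃'_2), and equal total effective state, χ(B'_1) · χ(B'_2) = χ(B̃'_1) · χ(B̃'_2). -/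
import Mathlib


/-- A crossing generator: one of the four symbols `u`, `d`, `u⁻¹`, `d⁻¹`. -/
inductive CrossGen : Type
  | u : CrossGen
  | d : CrossGen
  | uInv : CrossGen
  | dInv : CrossGen
deriving DecidableEq

/-- The crossing value: `+1` for `u` and `d`, `-1` for `u⁻¹` and `d⁻¹`. -/
def crossVal : CrossGen → ℤ
  | .u => 1
  | .d => 1
  | .uInv => -1
  | .dInv => -1

/-- The transposition of `{1,2,3}` induced by a crossing generator:
`u, u⁻¹ ↦ (1 2)` and `d, d⁻¹ ↦ (2 3)`. -/
def genPerm : CrossGen → Equiv.Perm (Fin 3)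
  | .u => Equiv.swap 0 1
  | .uInv => Equiv.swap 0 1
  | .d => Equiv.swap 1 2
  | .dInv => Equiv.swap 1 2

/-- The permutation induced by a crossing sequence; the head of the list acts first. -/
def seqPerm : List CrossGen → Equiv.Perm (Fin 3)
  | [] => 1
  | x :: xs => seqPerm xs * genPerm x

/-- The crossing number `c(X)`: the sum of the crossing values of the entries. -/
def crossSum (X : List CrossGen) : ℤ := (X.map crossVal).sum

/-- The action `σ • T` of a permutation of `{1,2,3}` on a twist triple `T ∈ ℤ³`,
permuting the entries. -/
def permAct (σ : Equiv.Perm (Fin 3)) (T : Fin 3 → ℤ) : Fin 3 → ℤ :=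
  fun i => T (σ⁻¹ i)

/-- A braid (in unique representation): a quadruple `(S_l, T, X, S_r)` of a left
end-node state, an internal twist triple, a crossing sequence and a right
end-node state. -/
structure Braid : Type where
  Sl : ℤ
  T : Fin 3 → ℤ
  X : List CrossGen
  Sr : ℤ

/-- The effective twist `Θ(B) = T₁ + T₂ + T₃ − 2 c(X)`. -/
def effTwist (B : Braid) : ℤ := B.T 0 + B.T 1 + B.T 2 - 2 * crossSum B.X

/-- The effective state `χ(B) = (−1)^{|X|} S_l S_r`. -/
def effState (B : Braid) : ℤ := (-1) ^ B.X.length * B.Sl * B.Sr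


lemma crossSum_append (X Y : List CrossGen) :
    crossSum (X ++ Y) = crossSum X + crossSum Y := by
  simp [crossSum]

lemma permAct_sum3 (σ : Equiv.Perm (Fin 3)) (T : Fin 3 → ℤ) :
    permAct σ T 0 + permAct σ T 1 + permAct σ T 2 = T 0 + T 1 + T 2 := by
  have h := Equiv.sum_comp σ⁻¹ T
  simpa [Fin.sum_univ_three, permAct] using h

lemma state_form (a b c : ℕ) (S1l S S2r : ℤ) (hS2 : S * S = 1) :
    ((-1 : ℤ) ^ a * S1l * ((-1) ^ b * S)) * ((-1) ^ (b + c) * ((-1) ^ b * S) * S2r)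
      = (-1) ^ (a + b + c) * S1l * S2r := by
  have hb : (-1 : ℤ) ^ b * (-1) ^ b = 1 := by rw [← mul_pow]; norm_num
  calc ((-1 : ℤ) ^ a * S1l * ((-1) ^ b * S)) * ((-1) ^ (b + c) * ((-1) ^ b * S) * S2r)
      = ((-1) ^ a * (-1) ^ b * (-1) ^ c) * ((-1) ^ b * (-1) ^ b) * (S * S) * S1l * S2r := by
        rw [pow_add]; ring
    _ = (-1) ^ (a + b + c) * S1l * S2r := by rw [hb, hS2, pow_add, pow_add]; ring

/-- The conservation law for right exchange interactions is independent of the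
virtual braid exchanged and of the chosen reducible segment. -/
theorem exchange_conservation_independent_of_virtual_braid
    (S1l S S2r : ℤ) (hS1l : S1l = 1 ∨ S1l = -1) (hS : S = 1 ∨ S = -1)
    (hS2r : S2r = 1 ∨ S2r = -1)
    (T1 T2 T Ttil : Fin 3 → ℤ) (X1A X1B Y1A Y1B X2 : List CrossGen)
    (hX : X1A ++ X1B = Y1A ++ Y1B) :
    (effTwist ⟨S1l, T1 - permAct (seqPerm X1A)⁻¹ T, X1A, (-1) ^ X1B.length * S⟩
        + effTwist ⟨(-1) ^ X1B.length * S, T + permAct (seqPerm X1B)⁻¹ T2, X1B ++ X2, S2r⟩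
      = effTwist ⟨S1l, T1 - permAct (seqPerm Y1A)⁻¹ Ttil, Y1A, (-1) ^ Y1B.length * S⟩
        + effTwist ⟨(-1) ^ Y1B.length * S, Ttil + permAct (seqPerm Y1B)⁻¹ T2, Y1B ++ X2, S2r⟩)
    ∧ (effState ⟨S1l, T1 - permAct (seqPerm X1A)⁻¹ T, X1A, (-1) ^ X1B.length * S⟩
        * effState ⟨(-1) ^ X1B.length * S, T + permAct (seqPerm X1B)⁻¹ T2, X1B ++ X2, S2r⟩
      = effState ⟨S1l, T1 - permAct (seqPerm Y1A)⁻¹ Ttil, Y1A, (-1) ^ Y1B.length * S⟩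
        * effState ⟨(-1) ^ Y1B.length * S, Ttil + permAct (seqPerm Y1B)⁻¹ T2, Y1B ++ X2, S2r⟩) := by
  have hlen : X1A.length + X1B.length = Y1A.length + Y1B.length := by
    have := congrArg List.length hX; simpa using this
  have hc : crossSum X1A + crossSum X1B = crossSum Y1A + crossSum Y1B := by
    have := congrArg crossSum hX; simpa [crossSum_append] using this
  have hS2 : S * S = 1 := by rcases hS with h | h <;> simp [h]
  constructor
  · have h1 := permAct_sum3 (seqPerm X1A)⁻¹ T
    have h2 := permAct_sum3 (seqPerm X1B)⁻¹ T2
    have h3 := permAct_sum3 (seqPerm Y1A)⁻¹ Ttil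
    have h4 := permAct_sum3 (seqPerm Y1B)⁻¹ T2
    simp only [effTwist, Pi.sub_apply, Pi.add_apply, crossSum_append]
    linarith
  · simp only [effState, List.length_append]
    rw [state_form _ _ _ _ _ _ hS2, state_form _ _ _ _ _ _ hS2, hlen]
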